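/- Let β > 0. For every solution of the delayed Hegselmann–Krause system, all indices i, j and all t ≥ 2τ, one has |x_j(t−τ) − x_i(t−σ)| ≤ d_x(t−τ) + ∫_{t−τ}^{t−σ} d_x(s−τ) ds + β^{−1} e^{2τ} F(t−σ). -/

import Mathlib

open scoped BigOperators
open MeasureTheory

/-- Diameter of the agent configuration at time `t`. -/
noncomputable def hkDiam {N d : ℕ} (x : Fin N → ℝ → EuclideanSpace ℝ (Fin d)) (t : ℝ) : ℝ :=
  ⨆ i : Fin N, ⨆ j : Fin N, ‖x i t - x j t‖

/-- Maximum of the norms of the derivatives at time `t`. -/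
noncomputable def hkMaxDer {N d : ℕ} (x' : Fin N → ℝ → EuclideanSpace ℝ (Fin d)) (t : ℝ) : ℝ :=
  ⨆ i : Fin N, ‖x' i t‖

/-- Minimal communication rate `a̲(t) = min_{i ≠ j} ψ(|x_i(t-σ) - x_j(t-τ)|)/(N-1)`. -/
noncomputable def hkAMin {N d : ℕ} (ψ : ℝ → ℝ) (σ τ : ℝ)
    (x : Fin N → ℝ → EuclideanSpace ℝ (Fin d)) (t : ℝ) : ℝ :=
  ⨅ p : {p : Fin N × Fin N // p.1 ≠ p.2},
    ψ ‖x p.val.1 (t - σ) - x p.val.2 (t - τ)‖ / (N - 1)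


/-- Lyapunov–Krasovskii functional
`F(t) = d_x(t) + β ∫_{max(0,t-2τ)}^t e^{-(t-s)} ∫_s^t max_i |ẋ_i(r)| dr ds`. -/
noncomputable def hkF {N d : ℕ} (β τ : ℝ)
    (x x' : Fin N → ℝ → EuclideanSpace ℝ (Fin d)) (t : ℝ) : ℝ :=
  hkDiam x t +
    β * ∫ s in (max 0 (t - 2 * τ))..t, Real.exp (-(t - s)) * ∫ r in s..t, hkMaxDer x' r

/-!
Write `c(s) = max_k |ẋ_k(s)|`. By the triangle inequality,
`|x_j(t-τ) - x_i(t-σ)| ≤ d_x(t-τ) + ∫_{t-τ}^{t-σ} c`. Each velocity is a combination of the delayed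
differences `x_l(s-τ) - x_k(s-σ)` with nonnegative weights of total mass at most one, so the same
estimate gives `c(s) ≤ d_x(s-τ) + ∫_{s-τ}^{s-σ} c ≤ d_x(s-τ) + ∫_{s-τ}^{t-σ} c`. Integrating over
`s ∈ [t-τ, t-σ]`, the tail integrals live on a window of length at most `2τ` ending at `t-σ`, where
the weight `e^{-(t-σ-u)}` of `F(t-σ)` is at least `e^{-2τ}`.
-/

open Set

theorem ContinuousOn.iSup_fintype {α ι : Type*} [TopologicalSpace α] [Fintype ι]
    {f : ι → α → ℝ} {s : Set α} (hf : ∀ i, ContinuousOn (f i) s) :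
    ContinuousOn (fun a => ⨆ i, f i a) s := by
  cases isEmpty_or_nonempty ι
  · simpa only [Real.iSup_of_isEmpty] using continuousOn_const
  · simp_rw [← Finset.sup'_univ_eq_ciSup]
    exact ContinuousOn.finset_sup'_apply Finset.univ_nonempty fun i _ => hf i

theorem norm_sum_smul_le_of_sum_le_one {ι E : Type*} [SeminormedAddCommGroup E]
    [NormedSpace ℝ E] {s : Finset ι} {w : ι → ℝ} {v : ι → E} {M : ℝ}
    (hw₀ : ∀ j ∈ s, 0 ≤ w j) (hw₁ : ∑ j ∈ s, w j ≤ 1) (hv : ∀ j ∈ s, ‖v j‖ ≤ M) (hM : 0 ≤ M) :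
    ‖∑ j ∈ s, w j • v j‖ ≤ M :=
  calc ‖∑ j ∈ s, w j • v j‖ ≤ ∑ j ∈ s, w j * M := by
        refine (norm_sum_le _ _).trans (Finset.sum_le_sum fun j hj => ?_)
        rw [norm_smul, Real.norm_of_nonneg (hw₀ j hj)]
        exact mul_le_mul_of_nonneg_left (hv j hj) (hw₀ j hj)
    _ = (∑ j ∈ s, w j) * M := (Finset.sum_mul _ _ _).symm
    _ ≤ M := mul_le_of_le_one_left hM hw₁

theorem integral_le_exp_mul_integral_exp_mul {g : ℝ → ℝ} {m p q T L : ℝ}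
    (hmp : m ≤ p) (hpq : p ≤ q) (hqT : q ≤ T) (hp : T - L ≤ p)
    (hg₀ : ∀ u ∈ Icc m T, 0 ≤ g u) (hg : ContinuousOn g (Icc m T)) :
    ∫ u in p..q, g u ≤ Real.exp L * ∫ u in m..T, Real.exp (-(T - u)) * g u := by
  have hpqm : Icc p q ⊆ Icc m T := Icc_subset_Icc hmp hqT
  have hw : ContinuousOn (fun u => Real.exp (-(T - u)) * g u) (Icc m T) :=
    (Real.continuous_exp.comp (continuous_const.sub continuous_id).neg).continuousOn.mul hg
  calc ∫ u in p..q, g u ≤ ∫ u in p..q, Real.exp L * (Real.exp (-(T - u)) * g u) := by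
        refine intervalIntegral.integral_mono_on hpq ((hg.mono hpqm).intervalIntegrable_of_Icc hpq)
          ((continuousOn_const.mul hw).mono hpqm |>.intervalIntegrable_of_Icc hpq) fun u hu => ?_
        have hexp : 1 ≤ Real.exp L * Real.exp (-(T - u)) := by
          rw [← Real.exp_add]
          exact Real.one_le_exp (by linarith [hu.1])
        rw [← mul_assoc]
        exact le_mul_of_one_le_left (hg₀ u (hpqm hu)) hexp
    _ = Real.exp L * ∫ u in p..q, Real.exp (-(T - u)) * g u :=
        intervalIntegral.integral_const_mul _ _
    _ ≤ Real.exp L * ∫ u in m..T, Real.exp (-(T - u)) * g u := by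
        refine mul_le_mul_of_nonneg_left (intervalIntegral.integral_mono_interval hmp hpq hqT
          (ae_restrict_of_forall_mem measurableSet_Ioc fun u hu => ?_)
          (hw.intervalIntegrable_of_Icc (hmp.trans (hpq.trans hqT)))) (Real.exp_pos L).le
        exact mul_nonneg (Real.exp_pos _).le (hg₀ u (Ioc_subset_Icc_self hu))

theorem integral_le_integral_delay_add_exp_mul {c D : ℝ → ℝ} {σ τ t : ℝ}
    (hσ : 0 ≤ σ) (hστ : σ ≤ τ) (ht : 2 * τ ≤ t) (hc₀ : ∀ r, 0 ≤ c r)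
    (hc : ContinuousOn c (Ici 0)) (hD : ContinuousOn D (Ici 0))
    (hbound : ∀ s ∈ Icc (t - τ) (t - σ), c s ≤ D (s - τ) + ∫ r in (s - τ)..(s - σ), c r) :
    ∫ s in (t - τ)..(t - σ), c s ≤ (∫ s in (t - τ)..(t - σ), D (s - τ)) +
      Real.exp (2 * τ) * ∫ u in (max 0 (t - σ - 2 * τ))..(t - σ),
        Real.exp (-(t - σ - u)) * ∫ r in u..(t - σ), c r := by
  set T := t - σ
  set G : ℝ → ℝ := fun u => ∫ r in u..T, c r
  have hT : 0 ≤ T := by linarith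
  have hcint : ∀ p q, 0 ≤ p → p ≤ q → IntervalIntegrable c volume p q := fun p q hp hpq =>
    (hc.mono fun r hr => hp.trans hr.1).intervalIntegrable_of_Icc hpq
  have hG : ContinuousOn G (Icc 0 T) := by
    simpa only [uIcc_of_le hT] using intervalIntegral.continuousOn_primitive_interval_left
      ((hc.mono fun r hr => hr.1).integrableOn_Icc.mono_set (uIcc_of_le hT).subset)
  have hG₀ : ∀ u ≤ T, 0 ≤ G u := fun u hu => intervalIntegral.integral_nonneg hu fun r _ => hc₀ r
  have hDτ : ContinuousOn (fun s => D (s - τ)) (Icc (t - τ) T) :=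
    hD.comp (continuousOn_id.sub continuousOn_const) fun s hs => by
      simp only [mem_Ici]; linarith [hs.1]
  have hGτ : ContinuousOn (fun s => G (s - τ)) (Icc (t - τ) T) :=
    hG.comp (continuousOn_id.sub continuousOn_const) fun s hs => by
      constructor <;> linarith [hs.1, hs.2]
  have hTτ : t - τ ≤ T := by linarith
  have hpointwise : ∀ s ∈ Icc (t - τ) T, c s ≤ D (s - τ) + G (s - τ) := by
    intro s hs
    have hsplit : G (s - τ) = (∫ r in (s - τ)..(s - σ), c r) + ∫ r in (s - σ)..T, c r :=
      (intervalIntegral.integral_add_adjacent_intervals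
        (hcint _ _ (by linarith [hs.1]) (by linarith))
        (hcint _ _ (by linarith [hs.1]) (by linarith [hs.2]))).symm
    linarith [hbound s hs, hG₀ (s - σ) (by linarith [hs.2])]
  calc ∫ s in (t - τ)..T, c s
      ≤ ∫ s in (t - τ)..T, (D (s - τ) + G (s - τ)) :=
        intervalIntegral.integral_mono_on hTτ (hcint _ _ (by linarith) hTτ)
          ((hDτ.add hGτ).intervalIntegrable_of_Icc hTτ) hpointwise
    _ = (∫ s in (t - τ)..T, D (s - τ)) + ∫ u in (t - τ - τ)..(T - τ), G u := by
        rw [intervalIntegral.integral_add (hDτ.intervalIntegrable_of_Icc hTτ)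
          (hGτ.intervalIntegrable_of_Icc hTτ), intervalIntegral.integral_comp_sub_right G τ]
    _ ≤ (∫ s in (t - τ)..T, D (s - τ)) +
          Real.exp (2 * τ) * ∫ u in (max 0 (T - 2 * τ))..T, Real.exp (-(T - u)) * G u := by
        gcongr
        exact integral_le_exp_mul_integral_exp_mul
          (max_le (by linarith) (by linarith)) (by linarith) (by linarith) (by linarith)
          (fun u hu => hG₀ u hu.2) (hG.mono (Icc_subset_Icc_left (le_max_left _ _)))

section HegselmannKrause

variable {N d : ℕ} {ψ : ℝ → ℝ} {σ τ : ℝ} {x : Fin N → ℝ → EuclideanSpace ℝ (Fin d)}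

theorem norm_sub_le_hkDiam (x : Fin N → ℝ → EuclideanSpace ℝ (Fin d)) (k l : Fin N) (u : ℝ) :
    ‖x k u - x l u‖ ≤ hkDiam x u :=
  (le_ciSup (f := fun l => ‖x k u - x l u‖) (finite_range _).bddAbove l).trans
    (le_ciSup (f := fun k => ⨆ l, ‖x k u - x l u‖) (finite_range _).bddAbove k)

theorem hkDiam_nonneg (x : Fin N → ℝ → EuclideanSpace ℝ (Fin d)) (u : ℝ) : 0 ≤ hkDiam x u :=
  Real.iSup_nonneg fun _ => Real.iSup_nonneg fun _ => norm_nonneg _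

theorem continuousOn_hkDiam {s : Set ℝ} (hx : ∀ i, ContinuousOn (x i) s) :
    ContinuousOn (hkDiam x) s :=
  ContinuousOn.iSup_fintype fun k => ContinuousOn.iSup_fintype fun l => ((hx k).sub (hx l)).norm

theorem norm_le_hkMaxDer (v : Fin N → ℝ → EuclideanSpace ℝ (Fin d)) (k : Fin N) (u : ℝ) :
    ‖v k u‖ ≤ hkMaxDer v u :=
  le_ciSup (f := fun k => ‖v k u‖) (finite_range _).bddAbove k

theorem hkMaxDer_nonneg (v : Fin N → ℝ → EuclideanSpace ℝ (Fin d)) (u : ℝ) : 0 ≤ hkMaxDer v u :=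
  Real.iSup_nonneg fun _ => norm_nonneg _

theorem continuousOn_hkMaxDer {v : Fin N → ℝ → EuclideanSpace ℝ (Fin d)} {s : Set ℝ}
    (hv : ∀ i, ContinuousOn (v i) s) : ContinuousOn (hkMaxDer v) s :=
  ContinuousOn.iSup_fintype fun k => (hv k).norm

-- Unlike `x'`, which is unconstrained at `t ≤ 0`, this is continuous up to `t = 0`.
noncomputable def hkField (ψ : ℝ → ℝ) (σ τ : ℝ) (x : Fin N → ℝ → EuclideanSpace ℝ (Fin d))
    (i : Fin N) (t : ℝ) : EuclideanSpace ℝ (Fin d) :=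
  ∑ j ∈ Finset.univ.erase i,
    (ψ ‖x i (t - σ) - x j (t - τ)‖ / (N - 1)) • (x j (t - τ) - x i (t - σ))

theorem continuousOn_hkField (hψ : ContinuousOn ψ (Ici 0)) (hστ : σ ≤ τ)
    (hx : ∀ i, ContinuousOn (x i) (Ici (-τ))) (i : Fin N) :
    ContinuousOn (hkField ψ σ τ x i) (Ici 0) := by
  have hshift : ∀ k δ, δ ≤ τ → ContinuousOn (fun s => x k (s - δ)) (Ici 0) := fun k δ hδ =>
    (hx k).comp (continuousOn_id.sub continuousOn_const) fun s hs => by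
      simp only [mem_Ici] at hs ⊢; linarith
  exact continuousOn_finsetSum _ fun j _ =>
    ((hψ.comp ((hshift i σ hστ).sub (hshift j τ le_rfl)).norm fun _ _ => norm_nonneg _).div_const
      _).smul ((hshift j τ le_rfl).sub (hshift i σ hστ))

theorem norm_hkField_le (hψ₀ : ∀ s, 0 ≤ s → 0 ≤ ψ s) (hψ₁ : ∀ s, 0 ≤ s → ψ s ≤ 1)
    (i : Fin N) (t : ℝ) :
    ‖hkField ψ σ τ x i t‖ ≤ hkDiam x (t - τ) + ‖x i (t - τ) - x i (t - σ)‖ := by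
  have hN : (0 : ℝ) ≤ N - 1 := sub_nonneg.2 (Nat.one_le_cast.2 i.pos)
  refine norm_sum_smul_le_of_sum_le_one
    (fun j _ => div_nonneg (hψ₀ _ (norm_nonneg _)) hN) ?_ (fun j _ => ?_)
    (add_nonneg (hkDiam_nonneg x _) (norm_nonneg _))
  · calc ∑ j ∈ Finset.univ.erase i, ψ ‖x i (t - σ) - x j (t - τ)‖ / ((N : ℝ) - 1)
        ≤ ∑ _j ∈ Finset.univ.erase i, 1 / ((N : ℝ) - 1) :=
          Finset.sum_le_sum fun j _ => div_le_div_of_nonneg_right (hψ₁ _ (norm_nonneg _)) hN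
      _ = ((N : ℝ) - 1) / ((N : ℝ) - 1) := by
          rw [Finset.sum_const, Finset.card_erase_of_mem (Finset.mem_univ i), Finset.card_univ,
            Fintype.card_fin, nsmul_eq_mul, Nat.cast_pred i.pos, mul_one_div]
      _ ≤ 1 := div_self_le_one _
  · exact (norm_sub_le_norm_sub_add_norm_sub _ (x i (t - τ)) _).trans
      (add_le_add_left (norm_sub_le_hkDiam x j i _) _)

theorem norm_sub_le_integral_hkMaxDer_hkField (hψ : ContinuousOn ψ (Ici 0)) (hτ : 0 ≤ τ)
    (hστ : σ ≤ τ) (hx : ∀ i, ContinuousOn (x i) (Ici (-τ)))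
    (hder : ∀ i, ∀ t > (0 : ℝ), HasDerivAt (x i) (hkField ψ σ τ x i t) t)
    {a b : ℝ} (ha : 0 ≤ a) (hab : a ≤ b) (i : Fin N) :
    ‖x i b - x i a‖ ≤ ∫ r in a..b, hkMaxDer (hkField ψ σ τ x) r := by
  have hsub : Icc a b ⊆ Ici 0 := fun r hr => ha.trans hr.1
  have hfield k := (continuousOn_hkField hψ hστ hx k).mono hsub
  calc ‖x i b - x i a‖ ≤ ∫ r in a..b, ‖hkField ψ σ τ x i r‖ := by
        rw [← intervalIntegral.integral_eq_sub_of_hasDerivAt_of_le hab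
          ((hx i).mono fun r hr => by simp only [mem_Ici]; linarith [hr.1])
          (fun r hr => hder i r (ha.trans_lt hr.1)) ((hfield i).intervalIntegrable_of_Icc hab)]
        exact intervalIntegral.norm_integral_le_integral_norm hab
    _ ≤ ∫ r in a..b, hkMaxDer (hkField ψ σ τ x) r :=
        intervalIntegral.integral_mono_on hab ((hfield i).norm.intervalIntegrable_of_Icc hab)
          ((continuousOn_hkMaxDer hfield).intervalIntegrable_of_Icc hab)
          fun r _ => norm_le_hkMaxDer _ i r

theorem hkMaxDer_hkField_le (hψ : ContinuousOn ψ (Ici 0)) (hψ₀ : ∀ s, 0 ≤ s → 0 ≤ ψ s)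
    (hψ₁ : ∀ s, 0 ≤ s → ψ s ≤ 1) (hσ : 0 ≤ σ) (hστ : σ ≤ τ)
    (hx : ∀ i, ContinuousOn (x i) (Ici (-τ)))
    (hder : ∀ i, ∀ t > (0 : ℝ), HasDerivAt (x i) (hkField ψ σ τ x i t) t) {s : ℝ} (hs : τ ≤ s) :
    hkMaxDer (hkField ψ σ τ x) s ≤
      hkDiam x (s - τ) + ∫ r in (s - τ)..(s - σ), hkMaxDer (hkField ψ σ τ x) r := by
  have hlag : s - τ ≤ s - σ := by linarith
  refine Real.iSup_le (fun i => (norm_hkField_le hψ₀ hψ₁ i s).trans (add_le_add le_rfl ?_))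
    (add_nonneg (hkDiam_nonneg x _)
      (intervalIntegral.integral_nonneg hlag fun r _ => hkMaxDer_nonneg _ r))
  rw [norm_sub_rev]
  exact norm_sub_le_integral_hkMaxDer_hkField hψ (hσ.trans hστ) hστ hx hder
    (sub_nonneg.2 hs) hlag i

theorem hkF_eq {x' : Fin N → ℝ → EuclideanSpace ℝ (Fin d)} (β : ℝ) (hτ : 0 ≤ τ)
    (hode : ∀ i, ∀ t > (0 : ℝ), x' i t = hkField ψ σ τ x i t) {T : ℝ} (hT : 0 ≤ T) :
    hkF β τ x x' T = hkDiam x T + β * ∫ s in (max 0 (T - 2 * τ))..T,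
      Real.exp (-(T - s)) * ∫ r in s..T, hkMaxDer (hkField ψ σ τ x) r := by
  refine congrArg (hkDiam x T + β * ·) (intervalIntegral.integral_congr fun s hs => ?_)
  rw [uIcc_of_le (max_le hT (by linarith))] at hs
  refine congrArg (Real.exp (-(T - s)) * ·) (intervalIntegral.integral_congr_ae
    (Filter.Eventually.of_forall fun r hr => ?_))
  rw [uIoc_of_le hs.2] at hr
  exact iSup_congr fun i => by rw [hode i r ((le_max_left _ _).trans_lt (hs.1.trans_lt hr.1))]

end HegselmannKrause

theorem stmt_6_general
    (N d : ℕ)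
    (σ τ : ℝ) (hσ : 0 ≤ σ) (hστ : σ ≤ τ)
    (β : ℝ) (hβ : 0 < β)
    (ψ : ℝ → ℝ)
    (hψpos : ∀ s, 0 ≤ s → 0 < ψ s)
    (hψcont : ContinuousOn ψ (Set.Ici 0))
    (hψbdd : ∀ s, 0 ≤ s → ψ s ≤ 1)
    (x x' : Fin N → ℝ → EuclideanSpace ℝ (Fin d))
    (hxc : ∀ i, ContinuousOn (x i) (Set.Ici (-τ)))
    (hder : ∀ i, ∀ t > (0:ℝ), HasDerivAt (x i) (x' i t) t)
    (hode : ∀ i, ∀ t > (0:ℝ),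
      x' i t = ∑ j ∈ Finset.univ.erase i,
        (ψ ‖x i (t - σ) - x j (t - τ)‖ / (N - 1)) • (x j (t - τ) - x i (t - σ))) :
    ∀ (i j : Fin N), ∀ t, 2 * τ ≤ t →
      ‖x j (t - τ) - x i (t - σ)‖ ≤ hkDiam x (t - τ)
        + (∫ s in (t - τ)..(t - σ), hkDiam x (s - τ))
        + β⁻¹ * Real.exp (2 * τ) * hkF β τ x x' (t - σ) := by
  intro i j t ht
  have hτ : 0 ≤ τ := hσ.trans hστ
  have hψ₀ : ∀ s, 0 ≤ s → 0 ≤ ψ s := fun s hs => (hψpos s hs).le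
  have hder' : ∀ i, ∀ t > (0 : ℝ), HasDerivAt (x i) (hkField ψ σ τ x i t) t :=
    fun i t ht => (hder i t ht).congr_deriv (hode i t ht)
  have hdisp : ‖x j (t - τ) - x i (t - σ)‖ ≤
      hkDiam x (t - τ) + ∫ r in (t - τ)..(t - σ), hkMaxDer (hkField ψ σ τ x) r := by
    refine (norm_sub_le_norm_sub_add_norm_sub _ (x i (t - τ)) _).trans
      (add_le_add (norm_sub_le_hkDiam x j i _) ?_)
    rw [norm_sub_rev]
    exact norm_sub_le_integral_hkMaxDer_hkField hψcont hτ hστ hxc hder' (by linarith)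
      (by linarith) i
  have hint := integral_le_integral_delay_add_exp_mul hσ hστ ht (hkMaxDer_nonneg _)
    (continuousOn_hkMaxDer (continuousOn_hkField hψcont hστ hxc))
    ((continuousOn_hkDiam hxc).mono (Ici_subset_Ici.2 (by linarith)))
    fun s hs => hkMaxDer_hkField_le hψcont hψ₀ hψbdd hσ hστ hxc hder' (by linarith [hs.1])
  have hF := hkF_eq (x' := x') β hτ hode (T := t - σ) (by linarith)
  have hdiam₀ : 0 ≤ hkDiam x (t - σ) := hkDiam_nonneg x _
  have hweighted := calc
    Real.exp (2 * τ) * ∫ u in (max 0 (t - σ - 2 * τ))..(t - σ),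
        Real.exp (-(t - σ - u)) * ∫ r in u..(t - σ), hkMaxDer (hkField ψ σ τ x) r
      = β⁻¹ * Real.exp (2 * τ) * (hkF β τ x x' (t - σ) - hkDiam x (t - σ)) := by
        rw [hF]; field_simp; ring
    _ ≤ β⁻¹ * Real.exp (2 * τ) * hkF β τ x x' (t - σ) := by
        gcongr; linarith
  linarith

theorem stmt_6
    (N d : ℕ) (hN : 2 ≤ N) (hd : 1 ≤ d)
    (σ τ : ℝ) (hσ : 0 ≤ σ) (hστ : σ ≤ τ) (hτ : 0 < τ)
    (β : ℝ) (hβ : 0 < β)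
    (ψ : ℝ → ℝ)
    (hψpos : ∀ s, 0 ≤ s → 0 < ψ s)
    (hψcont : ContinuousOn ψ (Set.Ici 0))
    (hψmono : ∀ s t, 0 ≤ s → s ≤ t → ψ t ≤ ψ s)
    (hψbdd : ∀ s, 0 ≤ s → ψ s ≤ 1)
    (x x' : Fin N → ℝ → EuclideanSpace ℝ (Fin d))
    (hxc : ∀ i, ContinuousOn (x i) (Set.Ici (-τ)))
    (hder : ∀ i, ∀ t > (0:ℝ), HasDerivAt (x i) (x' i t) t)
    (hode : ∀ i, ∀ t > (0:ℝ),
      x' i t = ∑ j ∈ Finset.univ.erase i,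
        (ψ ‖x i (t - σ) - x j (t - τ)‖ / (N - 1)) • (x j (t - τ) - x i (t - σ))) :
    ∀ (i j : Fin N), ∀ t, 2 * τ ≤ t →
      ‖x j (t - τ) - x i (t - σ)‖ ≤ hkDiam x (t - τ)
        + (∫ s in (t - τ)..(t - σ), hkDiam x (s - τ))
        + β⁻¹ * Real.exp (2 * τ) * hkF β τ x x' (t - σ) :=
  stmt_6_general N d σ τ hσ hστ β hβ ψ hψpos hψcont hψbdd x x' hxc hder hode
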